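/- Let W be a walk scheme for an instance (G, λ, s, t) of Dyck-2 reachability. Then every nonterminal ⟨u,v⟩ of W derives exactly one word over the terminal alphabet E, and this word is a valid walk from u to v. -/
import Mathlib


/-- The four-letter alphabet of Dyck-2: two kinds of opening and closing brackets. -/
inductive Sig2 : Type
  | o1 | c1 | o2 | c2
deriving DecidableEq

/-- The Dyck-2 language: the smallest language containing ε and closed under
concatenation and wrapping in either kind of matching brackets. -/
inductive IsDyck : List Sig2 → Prop
  | nil : IsDyck []
  | append {u v : List Sig2} : IsDyck u → IsDyck v → IsDyck (u ++ v)
  | br1 {u : List Sig2} : IsDyck u → IsDyck (Sig2.o1 :: u ++ [Sig2.c1])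
  | br2 {u : List Sig2} : IsDyck u → IsDyck (Sig2.o2 :: u ++ [Sig2.c2])

/-- `IsWalk E u v p` : `p` is a walk from `u` to `v` in the graph with edge set `E`. -/
def IsWalk {V : Type} (E : Set (V × V)) : V → V → List (V × V) → Prop
  | u, v, [] => u = v
  | u, v, e :: p => e ∈ E ∧ e.1 = u ∧ IsWalk E e.2 v p

/-- A walk is valid if its labels form a Dyck-2 word. -/
def IsValidWalk {V : Type} (E : Set (V × V)) (lab : V × V → Sig2) (u v : V)
    (p : List (V × V)) : Prop :=
  IsWalk E u v p ∧ IsDyck (p.map lab)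

/-- Right-hand sides of productions of a walk scheme (for a nonterminal `⟨u,v⟩`):
`split w` is `⟨u,v⟩ → ⟨u,w⟩⟨w,v⟩`, `wrap x y` is `⟨u,v⟩ → (u,x) ⟨x,y⟩ (y,v)`,
and `eps` is `⟨u,u⟩ → ε`. -/
inductive WSRhs (V : Type) : Type
  | split (w : V)
  | wrap (x y : V)
  | eps

/-- The edge relation of the dependency graph on nonterminals:
`q` occurs on the right-hand side of the (unique) production of `p ∈ N`. -/
def WSChild {V : Type} (N : Set (V × V)) (prod : V × V → WSRhs V)
    (p q : V × V) : Prop :=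
  p ∈ N ∧ match prod p with
    | .split w => q = (p.1, w) ∨ q = (w, p.2)
    | .wrap x y => q = (x, y)
    | .eps => False

/-- A walk scheme for an instance `(G, lab, s, t)` of Dyck-2 reachability:
a context-free grammar with terminal symbols the edges, nonterminals `N ⊆ V × V`,
axiom `⟨s,t⟩`, exactly one production per nonterminal of one of the three allowed
forms, whose dependency graph on nonterminals is acyclic. -/
structure WalkScheme {V : Type} (E : Set (V × V)) (lab : V × V → Sig2) (s t : V) where
  N : Set (V × V)
  prod : V × V → WSRhs V
  axiom_mem : (s, t) ∈ N
  prod_valid : ∀ u v : V, (u, v) ∈ N →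
    match prod (u, v) with
    | .split w => (u, w) ∈ N ∧ (w, v) ∈ N
    | .wrap x y => (u, x) ∈ E ∧ (y, v) ∈ E ∧ (x, y) ∈ N ∧
        ((lab (u, x) = Sig2.o1 ∧ lab (y, v) = Sig2.c1) ∨
         (lab (u, x) = Sig2.o2 ∧ lab (y, v) = Sig2.c2))
    | .eps => u = v
  acyclic : ∀ p : V × V, ¬ Relation.TransGen (WSChild N prod) p p

/-- `WSDerives W p α` : the nonterminal `p` of the walk scheme `W` derives the
word `α` over the terminal alphabet (the edges), by repeatedly applying the
productions of `W`. -/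
inductive WSDerives {V : Type} {E : Set (V × V)} {lab : V × V → Sig2} {s t : V}
    (W : WalkScheme E lab s t) : V × V → List (V × V) → Prop
  | split {u v w : V} {α β : List (V × V)} :
      (u, v) ∈ W.N → W.prod (u, v) = WSRhs.split w →
      WSDerives W (u, w) α → WSDerives W (w, v) β →
      WSDerives W (u, v) (α ++ β)
  | wrap {u v x y : V} {α : List (V × V)} :
      (u, v) ∈ W.N → W.prod (u, v) = WSRhs.wrap x y →
      WSDerives W (x, y) α →
      WSDerives W (u, v) ((u, x) :: (α ++ [(y, v)]))
  | eps {u v : V} :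
      (u, v) ∈ W.N → W.prod (u, v) = WSRhs.eps →
      WSDerives W (u, v) []

theorem isWalk_append {V : Type} {E : Set (V × V)} {u w v : V} {α β : List (V × V)}
    (hα : IsWalk E u w α) (hβ : IsWalk E w v β) : IsWalk E u v (α ++ β) := by
  induction α generalizing u with
  | nil => simpa [IsWalk] using hα ▸ hβ
  | cons e p ih =>
    obtain ⟨h1, h2, h3⟩ := hα
    exact ⟨h1, h2, ih h3⟩

theorem wsDerives_valid {V : Type} {E : Set (V × V)} {lab : V × V → Sig2} {s t : V}
    {W : WalkScheme E lab s t} {p : V × V} {α : List (V × V)}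
    (h : WSDerives W p α) : IsValidWalk E lab p.1 p.2 α := by
  induction h with
  | split hN hprod hα hβ ihα ihβ =>
    exact ⟨isWalk_append ihα.1 ihβ.1, by simpa using IsDyck.append ihα.2 ihβ.2⟩
  | @wrap u v x y α hN hprod hα ih =>
    have hv := W.prod_valid u v hN
    rw [hprod] at hv
    obtain ⟨he1, he2, _, hlab⟩ := hv
    constructor
    · exact ⟨he1, rfl, isWalk_append ih.1 ⟨he2, rfl, rfl⟩⟩
    · simp only [List.map_cons, List.map_append, List.map_cons, List.map_nil]
      rcases hlab with ⟨h1, h2⟩ | ⟨h1, h2⟩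
      · rw [h1, h2]; exact IsDyck.br1 ih.2
      · rw [h1, h2]; exact IsDyck.br2 ih.2
  | eps hN hprod =>
    have hv := W.prod_valid _ _ hN
    rw [hprod] at hv
    exact ⟨hv, IsDyck.nil⟩

theorem wsDerives_existsUnique {V : Type} [Fintype V] {E : Set (V × V)}
    {lab : V × V → Sig2} {s t : V} (W : WalkScheme E lab s t) :
    ∀ p : V × V, p ∈ W.N → ∃! α, WSDerives W p α := by
  have htrans : IsTrans (V × V) (fun a b => Relation.TransGen (WSChild W.N W.prod) b a) :=
    ⟨fun a b c hab hbc => hbc.trans hab⟩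
  have hirr : IsIrrefl (V × V) (fun a b => Relation.TransGen (WSChild W.N W.prod) b a) :=
    ⟨fun a => W.acyclic a⟩
  have hwf : WellFounded (fun a b : V × V => WSChild W.N W.prod b a) :=
    Subrelation.wf (fun h => Relation.TransGen.single h)
      (@Finite.wellFounded_of_trans_of_irrefl _ _ _ htrans hirr)
  intro p
  induction p using hwf.induction with
  | _ p IH =>
  obtain ⟨u, v⟩ := p
  intro hN
  have hv := W.prod_valid u v hN
  cases hprod : W.prod (u, v) with
  | split w =>
    rw [hprod] at hv
    obtain ⟨h1, h2⟩ := hv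
    obtain ⟨α, hα, huα⟩ := IH (u, w) ⟨hN, by rw [hprod]; exact Or.inl rfl⟩ h1
    obtain ⟨β, hβ, huβ⟩ := IH (w, v) ⟨hN, by rw [hprod]; exact Or.inr rfl⟩ h2
    refine ⟨α ++ β, WSDerives.split hN hprod hα hβ, ?_⟩
    intro γ hγ
    cases hγ with
    | split hN' hprod' hα' hβ' =>
      rw [hprod] at hprod'
      injection hprod' with hw
      subst hw
      rw [huα _ hα', huβ _ hβ']
    | wrap hN' hprod' _ => rw [hprod] at hprod'; cases hprod'
    | eps hN' hprod' => rw [hprod] at hprod'; cases hprod'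
  | wrap x y =>
    rw [hprod] at hv
    obtain ⟨_, _, h3, _⟩ := hv
    obtain ⟨α, hα, huα⟩ := IH (x, y) ⟨hN, by rw [hprod]⟩ h3
    refine ⟨(u, x) :: (α ++ [(y, v)]), WSDerives.wrap hN hprod hα, ?_⟩
    intro γ hγ
    cases hγ with
    | split hN' hprod' _ _ => rw [hprod] at hprod'; cases hprod'
    | wrap hN' hprod' hα' =>
      rw [hprod] at hprod'
      injection hprod' with hx hy
      subst hx; subst hy
      rw [huα _ hα']
    | eps hN' hprod' => rw [hprod] at hprod'; cases hprod'
  | eps =>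
    refine ⟨[], WSDerives.eps hN hprod, ?_⟩
    intro γ hγ
    cases hγ with
    | split hN' hprod' _ _ => rw [hprod] at hprod'; cases hprod'
    | wrap hN' hprod' _ => rw [hprod] at hprod'; cases hprod'
    | eps _ _ => rfl

/-- Every nonterminal `⟨u,v⟩` of a walk scheme derives exactly one word over the
terminal alphabet, and that word is a valid walk from `u` to `v`. -/
theorem walkScheme_derives_unique_validWalk
    {V : Type} [Fintype V] (E : Set (V × V)) (lab : V × V → Sig2) (s t : V)
    (W : WalkScheme E lab s t) (u v : V) (huv : (u, v) ∈ W.N) :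
    (∃! α : List (V × V), WSDerives W (u, v) α) ∧
      (∀ α : List (V × V), WSDerives W (u, v) α → IsValidWalk E lab u v α) :=
  ⟨wsDerives_existsUnique W (u, v) huv, fun _ h => wsDerives_valid h⟩
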